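/- arXiv:2404.11700 — 5 statements merged into one kernel-verified Lean document; each statement's English description precedes it below -/
import Mathlib

section
/- Let (ℓ_j)_{j=1}^n be independent random variables with geometric distributions with parameters p_j satisfying ε₀ < p_j < 1 − ε₀ for a fixed ε₀ > 0. Let S_n = ℓ_1 + ⋯ + ℓ_n and define δ_{0,n}(j) = P(S_n = j) and δ_{m,n} = ∇^m δ_{0,n}, where (∇a)(j) = a(j+1) − a(j). Then for every m ≥ 0 there exists a constant C_m (depending only on m and ε₀) such that sup_j |δ_{m,n}(j)| ≤ C_m n^{−(m+1)/2}. -/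
open MeasureTheory ProbabilityTheory

/-- The forward difference operator on sequences indexed by `ℤ`. -/
def nabla (a : ℤ → ℝ) : ℤ → ℝ := fun j => a (j + 1) - a j

/-!
Fourier inversion on the circle writes `P(S_n = j)` as the `j`-th Fourier coefficient on
`(-π, π]` of the characteristic function `φ_n` of `S_n`, and `∇` multiplies the function being
expanded by `e^{-it} - 1`; so `∇^m P(S_n = ·)(j)` is the `j`-th coefficient of
`φ_n(t) (e^{-it} - 1)^m`. By independence `φ_n` is a product of `n` geometric characteristic
functions, each of modulus at most `exp(-c t²)` on `[-π, π]` with `c = 2ε₀ / (5π²)`, while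
`|e^{-it} - 1| ≤ |t|`. Hence `|∇^m P(S_n = ·)(j)| ≤ (2π)⁻¹ ∫ |t|^m e^{-c n t²} dt`, and the
substitution `t ↦ t / √n` shows that this Gaussian moment is `O(n^{-(m+1)/2})`.
-/

open Complex Real Set

lemma fourierCoeffOn_neg_pi_pi (g : ℝ → ℂ) (j : ℤ) :
    fourierCoeffOn (neg_lt_self pi_pos) g j
      = (2 * π)⁻¹ • ∫ t in (-π)..π, cexp (-(j * t * I)) * g t := by
  rw [fourierCoeffOn_eq_integral, sub_neg_eq_add, ← two_mul, one_div]
  congr 1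
  refine intervalIntegral.integral_congr fun t _ => ?_
  rw [fourier_coe_apply, smul_eq_mul]
  congr 2
  push_cast
  field_simp

lemma fourierCoeffOn_mul_exp_neg_I_sub_one {g : ℝ → ℂ}
    (hg : IntervalIntegrable g volume (-π) π) (j : ℤ) :
    fourierCoeffOn (neg_lt_self pi_pos) (fun t => g t * (cexp (-(t * I)) - 1)) j
      = fourierCoeffOn (neg_lt_self pi_pos) g (j + 1)
        - fourierCoeffOn (neg_lt_self pi_pos) g j := by
  have hexp : ∀ k : ℤ, IntervalIntegrable (fun t : ℝ => cexp (-(k * t * I)) * g t) volume (-π) π :=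
    fun k => hg.continuousOn_mul (by fun_prop)
  simp only [fourierCoeffOn_neg_pi_pi, ← smul_sub,
    ← intervalIntegral.integral_sub (hexp _) (hexp _)]
  congr 1
  refine intervalIntegral.integral_congr fun t _ => ?_
  rw [show -(((j + 1 : ℤ) : ℂ) * t * I) = -(j * t * I) + -(t * I) by push_cast; ring,
    Complex.exp_add]
  ring

lemma ofReal_iterate_nabla_eq_fourierCoeffOn {a : ℤ → ℝ} {g : ℝ → ℂ}
    (hg : IntervalIntegrable g volume (-π) π)
    (ha : ∀ j, (a j : ℂ) = fourierCoeffOn (neg_lt_self pi_pos) g j) (m : ℕ) (j : ℤ) :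
    (nabla^[m] a j : ℂ)
      = fourierCoeffOn (neg_lt_self pi_pos) (fun t => g t * (cexp (-(t * I)) - 1) ^ m) j := by
  induction m generalizing j with
  | zero => simpa using ha j
  | succ m ih =>
    have hgm : IntervalIntegrable (fun t => g t * (cexp (-(t * I)) - 1) ^ m) volume (-π) π :=
      hg.mul_continuousOn (by fun_prop)
    rw [Function.iterate_succ_apply', nabla, ofReal_sub, ih, ih,
      ← fourierCoeffOn_mul_exp_neg_I_sub_one hgm]
    simp only [pow_succ, mul_assoc]

lemma norm_fourierCoeffOn_le {g : ℝ → ℂ} {G : ℝ → ℝ} (hG : IntervalIntegrable G volume (-π) π)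
    (hgG : ∀ t ∈ Ioc (-π) π, ‖g t‖ ≤ G t) (j : ℤ) :
    ‖fourierCoeffOn (neg_lt_self pi_pos) g j‖ ≤ (2 * π)⁻¹ * ∫ t in (-π)..π, G t := by
  rw [fourierCoeffOn_neg_pi_pi, norm_smul, Real.norm_of_nonneg (by positivity)]
  gcongr
  refine intervalIntegral.norm_integral_le_of_norm_le (neg_le_self pi_pos.le)
    (ae_of_all _ fun t ht => ?_) hG
  rw [norm_mul, ← ofReal_intCast, ← ofReal_mul, ← neg_mul, ← ofReal_neg, norm_exp_ofReal_mul_I,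
    one_mul]
  exact hgG t ht

lemma integral_exp_int_mul_I (k : ℤ) :
    ∫ t in (-π)..π, cexp (k * t * I) = if k = 0 then ((2 * π : ℝ) : ℂ) else 0 := by
  split_ifs with hk
  · simp [hk, two_mul]
  · have hkI : (k : ℂ) * I ≠ 0 := mul_ne_zero (Int.cast_ne_zero.mpr hk) I_ne_zero
    simp_rw [mul_right_comm _ _ I]
    rw [integral_exp_mul_complex hkI, div_eq_zero_iff, sub_eq_zero]
    left
    rw [show (k : ℂ) * I * π = k * I * (-π : ℝ) + k * (2 * π * I) by push_cast; ring,
      Complex.exp_add, exp_int_mul_two_pi_mul_I, mul_one]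

lemma norm_exp_neg_mul_I_sub_one_le (t : ℝ) : ‖cexp (-(t * I)) - 1‖ ≤ |t| := by
  simpa [mul_comm] using Real.norm_exp_I_mul_ofReal_sub_one_le (x := -t)

lemma norm_one_sub_mul_exp_sq (r t : ℝ) :
    ‖1 - r * cexp (t * I)‖ ^ 2 = (1 - r) ^ 2 + 2 * r * (1 - Real.cos t) := by
  rw [← normSq_eq_norm_sq, normSq_apply]
  simp only [sub_re, one_re, mul_re, ofReal_re, ofReal_im, exp_ofReal_mul_I_re,
    exp_ofReal_mul_I_im, sub_im, one_im, mul_im, zero_mul, sub_zero, add_zero, zero_sub]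
  linear_combination r ^ 2 * Real.sin_sq_add_cos_sq t

lemma mul_sq_le_one_sub_cos {t : ℝ} (ht : |t| ≤ π) : 2 / π ^ 2 * t ^ 2 ≤ 1 - Real.cos t := by
  have hsin : 2 / π * (|t| / 2) ≤ Real.sin (|t| / 2) :=
    mul_le_sin (by positivity) (by linarith)
  have hsq : (2 / π * (|t| / 2)) ^ 2 ≤ Real.sin (|t| / 2) ^ 2 :=
    pow_le_pow_left₀ (by positivity) hsin 2
  rw [sin_sq_eq_half_sub, show 2 * (|t| / 2) = |t| by ring, cos_abs] at hsq
  have : 2 / π ^ 2 * t ^ 2 = 2 * (2 / π * (|t| / 2)) ^ 2 := by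
    rw [← sq_abs t]; ring
  linarith

lemma inv_one_add_le_exp_neg {u : ℝ} (hu0 : 0 ≤ u) (hu4 : u ≤ 4) :
    (1 + u)⁻¹ ≤ rexp (-(u / 5)) := by
  have hlog : u / 5 ≤ Real.log (1 + u) := by
    have := one_sub_inv_le_log_of_pos (x := 1 + u) (by linarith)
    have : (1 + u)⁻¹ ≤ 1 - u / 5 := by
      rw [inv_eq_one_div, div_le_iff₀ (by linarith)]
      nlinarith
    linarith
  rw [Real.exp_neg, inv_le_inv₀ (by linarith) (exp_pos _)]
  calc rexp (u / 5) ≤ rexp (Real.log (1 + u)) := exp_le_exp.mpr hlog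
    _ = 1 + u := exp_log (by linarith)

noncomputable def geometricCharFun (q t : ℝ) : ℂ := q * cexp (t * I) / (1 - (1 - q) * cexp (t * I))

lemma norm_geometricCharFun_le {q t : ℝ} (hq0 : 0 < q) (hq1 : q < 1) (ht : |t| ≤ π) :
    ‖geometricCharFun q t‖ ≤ rexp (-(2 * (1 - q) / (5 * π ^ 2)) * t ^ 2) := by
  set u := 2 * (1 - q) * (1 - Real.cos t) with hu
  have hu0 : 0 ≤ u := mul_nonneg (by linarith) (by linarith [Real.cos_le_one t])
  have hu4 : u ≤ 4 := by nlinarith [Real.neg_one_le_cos t]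
  have hnorm_sq : ‖geometricCharFun q t‖ ^ 2 = q ^ 2 / (q ^ 2 + u) := by
    rw [geometricCharFun, show (1 : ℂ) - q = ((1 - q : ℝ) : ℂ) by push_cast; rfl, norm_div, div_pow,
      norm_one_sub_mul_exp_sq, norm_mul, norm_exp_ofReal_mul_I, mul_one, norm_real,
      Real.norm_of_nonneg hq0.le, hu]
    ring
  have hsq : ‖geometricCharFun q t‖ ^ 2 ≤ (1 + u)⁻¹ := by
    rw [hnorm_sq, inv_eq_one_div, div_le_div_iff₀ (by positivity) (by linarith)]
    nlinarith [mul_le_mul_of_nonneg_right (show q ^ 2 ≤ 1 by nlinarith) hu0]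
  have hexp : rexp (-(u / 5)) ≤ rexp (-(2 * (1 - q) / (5 * π ^ 2)) * t ^ 2) ^ 2 := by
    rw [← Real.exp_nat_mul, exp_le_exp]
    have := mul_le_mul_of_nonneg_left (mul_sq_le_one_sub_cos ht) (show 0 ≤ 2 * (1 - q) by linarith)
    have e : ((2 : ℕ) : ℝ) * (-(2 * (1 - q) / (5 * π ^ 2)) * t ^ 2)
        = -(2 * (1 - q) * (2 / π ^ 2 * t ^ 2) / 5) := by push_cast; ring
    rw [e]
    linarith
  exact (pow_le_pow_iff_left₀ (norm_nonneg _) (exp_pos _).le two_ne_zero).mp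
    (hsq.trans ((inv_one_add_le_exp_neg hu0 hu4).trans hexp))

lemma integrable_abs_pow_mul_exp_neg_mul_sq {b : ℝ} (hb : 0 < b) (m : ℕ) :
    Integrable fun t : ℝ => |t| ^ m * rexp (-b * t ^ 2) := by
  have h := integrable_rpow_mul_exp_neg_mul_sq hb (s := m) (by linarith [m.cast_nonneg (α := ℝ)])
  simp_rw [Real.rpow_natCast] at h
  simpa [abs_mul, abs_pow, abs_of_pos (exp_pos _)] using h.abs

lemma integral_abs_pow_mul_exp_neg_mul_sq {b : ℝ} (hb : 0 < b) (m : ℕ) :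
    ∫ t, |t| ^ m * rexp (-b * t ^ 2) = b ^ (-((m : ℝ) + 1) / 2) * Real.Gamma ((m + 1) / 2) := by
  have h := integral_rpow_mul_exp_neg_mul_rpow two_pos (q := m)
    (by linarith [m.cast_nonneg (α := ℝ)]) hb
  simp_rw [Real.rpow_natCast, Real.rpow_two] at h
  have := integral_comp_abs (f := fun t => t ^ m * rexp (-b * t ^ 2))
  simp only [sq_abs] at this
  rw [this, h]
  field_simp

lemma intervalIntegral_abs_pow_mul_exp_neg_mul_sq_le {a b c : ℝ} (hab : a ≤ b) (hc : 0 < c)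
    (m : ℕ) :
    ∫ t in a..b, |t| ^ m * rexp (-c * t ^ 2)
      ≤ c ^ (-((m : ℝ) + 1) / 2) * Real.Gamma ((m + 1) / 2) := by
  rw [intervalIntegral.integral_of_le hab, ← integral_abs_pow_mul_exp_neg_mul_sq hc]
  exact setIntegral_le_integral (integrable_abs_pow_mul_exp_neg_mul_sq hc m)
    (ae_of_all _ fun t => by positivity)

section

variable {Ω : Type*} [MeasurableSpace Ω] {μ : Measure Ω}

lemma charFun_map_intCast {Z : Ω → ℤ} (hZ : Measurable Z) (t : ℝ) :
    charFun (μ.map fun ω => (Z ω : ℝ)) t = ∫ ω, cexp (t * Z ω * I) ∂μ := by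
  rw [charFun_apply_real, integral_map (by fun_prop) (by fun_prop)]
  simp

lemma ofReal_measureReal_eq_fourierCoeffOn_charFun [IsFiniteMeasure μ] {Z : Ω → ℤ}
    (hZ : Measurable Z) (j : ℤ) :
    (μ.real {ω | Z ω = j} : ℂ)
      = fourierCoeffOn (neg_lt_self pi_pos) (charFun (μ.map fun ω => (Z ω : ℝ))) j := by
  have hint : Integrable (Function.uncurry fun (t : ℝ) ω => cexp ((Z ω - j : ℤ) * t * I))
      ((volume.restrict (uIoc (-π) π)).prod μ) := by
    have : IsFiniteMeasure (volume.restrict (uIoc (-π) π)) :=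
      isFiniteMeasure_restrict.mpr measure_Ioc_lt_top.ne
    have hZj : Measurable fun ω => ((Z ω - j : ℤ) : ℂ) := measurable_from_top.comp (hZ.sub_const j)
    refine Integrable.of_bound (Measurable.aestronglyMeasurable ?_) 1 (ae_of_all _ fun x => ?_)
    · exact Complex.measurable_exp.comp
        (((hZj.comp measurable_snd).mul (measurable_ofReal.comp measurable_fst)).mul_const I)
    · rw [Function.uncurry_apply_pair, ← ofReal_intCast, ← ofReal_mul, norm_exp_ofReal_mul_I]
  calc (μ.real {ω | Z ω = j} : ℂ)
      = (2 * π)⁻¹ • ∫ ω, {ω | Z ω = j}.indicator (fun _ => ((2 * π : ℝ) : ℂ)) ω ∂μ := by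
        rw [integral_indicator_const _ (measurableSet_eq_fun hZ measurable_const)]
        simp only [real_smul]
        push_cast
        field_simp
    _ = (2 * π)⁻¹ • ∫ ω, (∫ t in (-π)..π, cexp ((Z ω - j : ℤ) * t * I)) ∂μ := by
        congr 2 with ω
        rw [integral_exp_int_mul_I]
        simp only [Set.indicator, Set.mem_ofPred_eq, sub_eq_zero]
    _ = (2 * π)⁻¹ • ∫ t in (-π)..π, ∫ ω, cexp ((Z ω - j : ℤ) * t * I) ∂μ := by
        rw [intervalIntegral_integral_swap hint]
    _ = _ := by
        rw [fourierCoeffOn_neg_pi_pi]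
        congr 1
        refine intervalIntegral.integral_congr fun t _ => ?_
        rw [charFun_map_intCast hZ, ← integral_const_mul]
        congr 1 with ω
        rw [← Complex.exp_add]
        push_cast
        ring_nf

lemma charFun_map_natCast_eq_tsum [IsFiniteMeasure μ] {X : Ω → ℕ} (hX : Measurable X) (t : ℝ) :
    charFun (μ.map fun ω => (X ω : ℝ)) t = ∑' k : ℕ, μ.real {ω | X ω = k} • cexp (t * k * I) := by
  have hmap : ∫ x, cexp (t * x * I) ∂(μ.map fun ω => (X ω : ℝ))
      = ∫ k, cexp (t * (k : ℝ) * I) ∂(μ.map X) := by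
    rw [integral_map (by fun_prop) (by fun_prop), integral_map hX.aemeasurable (by fun_prop)]
  rw [charFun_apply_real, hmap, integral_countable]
  · simp_rw [map_measureReal_apply hX (measurableSet_singleton _), ofReal_natCast]
    rfl
  refine Integrable.of_bound (by fun_prop) 1 (ae_of_all _ fun k => ?_)
  rw [← ofReal_mul, norm_exp_ofReal_mul_I]

lemma charFun_map_geometric [IsFiniteMeasure μ] {X : Ω → ℕ} (hX : Measurable X) {q : ℝ}
    (hq0 : 0 < q) (hq1 : q < 1) (hpos : ∀ ω, 1 ≤ X ω)
    (hgeom : ∀ k, 1 ≤ k → μ.real {ω | X ω = k} = q * (1 - q) ^ (k - 1)) (t : ℝ) :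
    charFun (μ.map fun ω => (X ω : ℝ)) t = geometricCharFun q t := by
  have hterm : ∀ k : ℕ, μ.real {ω | X ω = k} • cexp (t * k * I)
      = if k = 0 then 0 else q * cexp (t * I) * ((1 - q) * cexp (t * I)) ^ (k - 1) := by
    intro k
    rcases Nat.eq_zero_or_pos k with rfl | hk
    · have : {ω | X ω = 0} = ∅ :=
        eq_empty_of_forall_notMem fun ω h => Nat.one_le_iff_ne_zero.mp (hpos ω) h
      simp [this]
    · rw [if_neg hk.ne', real_smul, hgeom k hk]
      obtain ⟨k, rfl⟩ := Nat.exists_eq_add_of_le' hk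
      rw [Nat.add_sub_cancel, mul_pow, ← Complex.exp_nat_mul]
      push_cast
      rw [show (t : ℂ) * (k + 1) * I = k * (t * I) + t * I by ring, Complex.exp_add]
      ring
  rw [charFun_map_natCast_eq_tsum hX, funext hterm]
  refine HasSum.tsum_eq ((hasSum_nat_add_iff' 1).mp ?_)
  simp only [Finset.range_one, Finset.sum_singleton, if_pos, Nat.add_sub_cancel, sub_zero,
    Nat.add_one_ne_zero, if_false, geometricCharFun, div_eq_mul_inv]
  refine (hasSum_geometric_of_norm_lt_one (K := ℂ) (ξ := (1 - q) * cexp (t * I)) ?_).mul_left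
    (q * cexp (t * I))
  rw [norm_mul, norm_exp_ofReal_mul_I, mul_one,
    show (1 : ℂ) - q = ((1 - q : ℝ) : ℂ) by push_cast; rfl,
    norm_real, Real.norm_of_nonneg (by linarith)]
  linarith

lemma charFun_map_sum_intCast_eq_prod [IsFiniteMeasure μ] {ι : Type*} {ℓ : ι → Ω → ℕ}
    (hmeas : ∀ i, Measurable (ℓ i)) (hindep : iIndepFun ℓ μ) (s : Finset ι) :
    charFun (μ.map fun ω => ((∑ i ∈ s, (ℓ i ω : ℤ) : ℤ) : ℝ))
      = ∏ i ∈ s, charFun (μ.map fun ω => (ℓ i ω : ℝ)) := by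
  have h := (hindep.comp (fun _ k => (k : ℝ)) fun _ => measurable_from_top).restrict s
  convert h.charFun_map_fun_finsetSum_eq_prod (fun i _ => by fun_prop) using 3
  · push_cast
    rfl
  · rfl

lemma norm_charFun_sum_geometric_le [IsFiniteMeasure μ] {ι : Type*} {ℓ : ι → Ω → ℕ} {p : ι → ℝ}
    {ε : ℝ} (hmeas : ∀ i, Measurable (ℓ i)) (hindep : iIndepFun ℓ μ) (hε : 0 ≤ ε)
    (hp : ∀ i, 0 < p i ∧ p i < 1 - ε) (hval : ∀ i ω, 1 ≤ ℓ i ω)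
    (hgeom : ∀ i k, 1 ≤ k → μ.real {ω | ℓ i ω = k} = p i * (1 - p i) ^ (k - 1))
    (s : Finset ι) {t : ℝ} (ht : |t| ≤ π) :
    ‖charFun (μ.map fun ω => ((∑ i ∈ s, (ℓ i ω : ℤ) : ℤ) : ℝ)) t‖
      ≤ rexp (-(2 * ε / (5 * π ^ 2) * s.card) * t ^ 2) := by
  rw [charFun_map_sum_intCast_eq_prod hmeas hindep, Finset.prod_apply, norm_prod]
  calc ∏ i ∈ s, ‖charFun (μ.map fun ω => (ℓ i ω : ℝ)) t‖
      ≤ ∏ _i ∈ s, rexp (-(2 * ε / (5 * π ^ 2)) * t ^ 2) := by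
        refine Finset.prod_le_prod (fun _ _ => norm_nonneg _) fun i _ => ?_
        have hq1 : p i < 1 := by linarith [(hp i).1, (hp i).2]
        rw [charFun_map_geometric (hmeas i) (hp i).1 hq1 (hval i) (hgeom i)]
        refine (norm_geometricCharFun_le (hp i).1 hq1 ht).trans ?_
        gcongr
        linarith [(hp i).2]
    _ = rexp (-(2 * ε / (5 * π ^ 2) * s.card) * t ^ 2) := by
        rw [Finset.prod_const, ← Real.exp_nat_mul]
        ring_nf

end

/-- For sums `S_n` of independent geometric random variables with parameters uniformly
inside `(0,1)`, the `m`-th discrete difference of the distribution `j ↦ P(S_n = j)`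
is `O(n^{-(m+1)/2})` uniformly in `j`. -/
theorem iterated_difference_decay {Ω : Type*} [MeasureSpace Ω]
    [IsProbabilityMeasure (ℙ : Measure Ω)]
    (ε₀ : ℝ) (hε₀ : 0 < ε₀) (p : ℕ → ℝ) (hp : ∀ j, ε₀ < p j ∧ p j < 1 - ε₀)
    (ℓ : ℕ → Ω → ℕ) (hmeas : ∀ j, Measurable (ℓ j))
    (hindep : iIndepFun ℓ ℙ)
    (hval : ∀ j ω, 1 ≤ ℓ j ω)
    (hgeom : ∀ j m, 1 ≤ m →
      (ℙ {ω | ℓ j ω = m}).toReal = p j * (1 - p j) ^ (m - 1)) :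
    ∀ m : ℕ, ∃ C : ℝ, ∀ n : ℕ, 1 ≤ n → ∀ j : ℤ,
      |nabla^[m]
          (fun k : ℤ => (ℙ {ω | (∑ i ∈ Finset.range n, (ℓ i ω : ℤ)) = k}).toReal) j|
        ≤ C * (n : ℝ) ^ (-((m : ℝ) + 1) / 2) := by
  intro m
  set c := 2 * ε₀ / (5 * π ^ 2)
  have hc : 0 < c := by positivity
  refine ⟨(2 * π)⁻¹ * (c ^ (-((m : ℝ) + 1) / 2) * Real.Gamma ((m + 1) / 2)), fun n hn j => ?_⟩
  have hcn : 0 < c * n := by positivity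
  have hS : Measurable fun ω => ∑ i ∈ Finset.range n, (ℓ i ω : ℤ) := by fun_prop
  have hbound : ∀ t ∈ Ioc (-π) π,
      ‖charFun ((ℙ : Measure Ω).map fun ω => ((∑ i ∈ Finset.range n, (ℓ i ω : ℤ) : ℤ) : ℝ)) t
        * (cexp (-(t * I)) - 1) ^ m‖ ≤ |t| ^ m * rexp (-(c * n) * t ^ 2) := by
    intro t ht
    rw [norm_mul, norm_pow, mul_comm]
    gcongr
    · exact norm_exp_neg_mul_I_sub_one_le t
    · refine (norm_charFun_sum_geometric_le hmeas hindep hε₀.le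
        (fun i => ⟨hε₀.trans (hp i).1, (hp i).2⟩) hval hgeom (Finset.range n)
        (abs_le.mpr ⟨ht.1.le, ht.2⟩)).trans_eq ?_
      rw [Finset.card_range]
  simp_rw [← measureReal_def]
  rw [← Real.norm_eq_abs, ← norm_real, ofReal_iterate_nabla_eq_fourierCoeffOn
    (continuous_charFun.intervalIntegrable _ _) (ofReal_measureReal_eq_fourierCoeffOn_charFun hS)]
  calc _ ≤ (2 * π)⁻¹ * ∫ t in (-π)..π, |t| ^ m * rexp (-(c * n) * t ^ 2) :=
        norm_fourierCoeffOn_le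
          ((integrable_abs_pow_mul_exp_neg_mul_sq hcn m).intervalIntegrable) hbound j
    _ ≤ (2 * π)⁻¹ * ((c * n) ^ (-((m : ℝ) + 1) / 2) * Real.Gamma ((m + 1) / 2)) := by
        gcongr
        exact intervalIntegral_abs_pow_mul_exp_neg_mul_sq_le (neg_le_self pi_pos.le) hcn m
    _ = _ := by
        rw [Real.mul_rpow hc.le n.cast_nonneg]
        ring
end

section
/- Let λ > 1, α ∈ ℝ, and let g, 𝔭, ψ, η : 𝕋 → ℝ be continuous with g > 0, 0 < 𝔭 < 1, ψ satisfying ∫_𝕋 (g(x)η(x)/𝔭(x)) ψ(x) dx = 0, and η satisfying λ^{−1} η(x+α) − η(x) = 1/g(x). Let κ(x) = Σ_{k=0}^∞ λ^{−k} g(x−kα)ψ(x−kα)/𝔭(x−kα). Then ∫_𝕋 κ(x)/g(x) dx = 0. -/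
open Function MeasureTheory

/-!
Write `F = gψ/𝔭`, so that `κ(x) = Σ_k λ^{-k} F(x - kα)` satisfies the renewal equation
`κ(x) = F(x) + λ⁻¹ κ(x - α)`. Replacing `1/g` by the twisted coboundary `λ⁻¹ η(· + α) - η` and
moving the translation from `η` onto `κ` (translation invariance of Lebesgue measure) gives
`∫ κ/g = ∫ (λ⁻¹ κ(x - α) - κ(x)) η(x) dx = -∫ F η = 0`.
-/

section OrbitSum

variable {G : Type*} {c C : ℝ} {F : G → ℝ}

lemma norm_pow_mul_le (k : ℕ) (hF : ∀ x, ‖F x‖ ≤ C) (y : G) :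
    ‖c ^ k * F y‖ ≤ ‖c‖ ^ k * C := by
  rw [norm_mul, norm_pow]
  exact mul_le_mul_of_nonneg_left (hF y) (by positivity)

variable [AddGroup G]

noncomputable def geomOrbitSum (c : ℝ) (a : G) (F : G → ℝ) (x : G) : ℝ :=
  ∑' k : ℕ, c ^ k * F (x - k • a)

lemma summable_geomOrbitSum (hc : ‖c‖ < 1) (a : G) (hF : ∀ x, ‖F x‖ ≤ C) (x : G) :
    Summable fun k : ℕ => c ^ k * F (x - k • a) :=
  .of_norm_bounded ((summable_geometric_of_lt_one (norm_nonneg c) hc).mul_right C)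
    fun k => norm_pow_mul_le k hF _

lemma geomOrbitSum_eq_add_mul (hc : ‖c‖ < 1) (a : G) (hF : ∀ x, ‖F x‖ ≤ C) (x : G) :
    geomOrbitSum c a F x = F x + c * geomOrbitSum c a F (x - a) := by
  rw [geomOrbitSum, (summable_geomOrbitSum hc a hF x).tsum_eq_zero_add, geomOrbitSum,
    ← tsum_mul_left]
  congr 1
  · simp
  · refine tsum_congr fun k => ?_
    rw [succ_nsmul, sub_add_eq_sub_sub_swap, pow_succ', mul_assoc]

lemma continuous_geomOrbitSum [TopologicalSpace G] [IsTopologicalAddGroup G] (hc : ‖c‖ < 1)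
    (a : G) (hFc : Continuous F) (hF : ∀ x, ‖F x‖ ≤ C) : Continuous (geomOrbitSum c a F) :=
  continuous_tsum (fun _ => continuous_const.mul (hFc.comp (continuous_sub_right _)))
    ((summable_geometric_of_lt_one (norm_nonneg c) hc).mul_right C)
    fun k _ => norm_pow_mul_le k hF _

end OrbitSum

lemma integral_mul_twisted_coboundary_eq_neg {G : Type*} [MeasurableSpace G] [AddGroup G]
    [MeasurableAdd G] (μ : Measure G) [μ.IsAddRightInvariant] (c : ℝ) (a : G)
    {K F η : G → ℝ} (hK : ∀ x, K x = F x + c * K (x - a))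
    (hKη : Integrable (fun x => K x * η (x + a)) μ) (hFη : Integrable (fun x => F x * η x) μ) :
    ∫ x, K x * (c * η (x + a) - η x) ∂μ = -∫ x, F x * η x ∂μ := by
  have hKη' : Integrable (fun x => K (x - a) * η x) μ := by
    simpa using hKη.comp_sub_right a
  have hshift : ∫ x, K x * η (x + a) ∂μ = ∫ x, K (x - a) * η x ∂μ := by
    rw [← integral_sub_right_eq_self (fun x => K x * η (x + a)) a]
    simp
  calc ∫ x, K x * (c * η (x + a) - η x) ∂μ
      = ∫ x, (c * (K x * η (x + a)) - (F x * η x + c * (K (x - a) * η x))) ∂μ := by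
        refine integral_congr_ae (.of_forall fun x => ?_)
        dsimp only
        rw [hK x]
        ring
    _ = c * ∫ x, K x * η (x + a) ∂μ - (∫ x, F x * η x ∂μ + c * ∫ x, K (x - a) * η x ∂μ) := by
        have hsum : Integrable (fun x => F x * η x + c * (K (x - a) * η x)) μ :=
          hFη.add (hKη'.const_mul c)
        rw [integral_sub (hKη.const_mul c) hsum, integral_add hFη (hKη'.const_mul c),
          integral_const_mul, integral_const_mul]
    _ = -∫ x, F x * η x ∂μ := by
        rw [hshift]
        ring

theorem kappa_integral_zero_general (α : ℝ) (lam : ℝ) (hlam : 1 < lam)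
    (g 𝔭 ψ η : AddCircle (1 : ℝ) → ℝ)
    (hgcont : Continuous g) (h𝔭cont : Continuous 𝔭) (hψcont : Continuous ψ)
    (hηcont : Continuous η)
    (h𝔭 : ∀ x, 0 < 𝔭 x ∧ 𝔭 x < 1)
    (hψ : ∫ x : AddCircle (1 : ℝ), (g x * η x / 𝔭 x) * ψ x = 0)
    (hη : ∀ x, lam⁻¹ * η (x + α) - η x = 1 / g x) :
    ∫ x : AddCircle (1 : ℝ),
        (∑' k : ℕ, lam ^ (-(k : ℤ)) * g (x - k • (α : AddCircle (1 : ℝ)))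
            * ψ (x - k • (α : AddCircle (1 : ℝ)))
            / 𝔭 (x - k • (α : AddCircle (1 : ℝ)))) / g x = 0 := by
  set F : AddCircle (1 : ℝ) → ℝ := fun x => g x * ψ x / 𝔭 x
  have hFc : Continuous F := (hgcont.mul hψcont).div h𝔭cont fun x => (h𝔭 x).1.ne'
  obtain ⟨C, hC⟩ := isCompact_univ.exists_bound_of_continuousOn hFc.continuousOn
  have hc : ‖lam⁻¹‖ < 1 := by
    rw [norm_inv, Real.norm_of_nonneg (by linarith)]
    exact inv_lt_one_of_one_lt₀ hlam
  set K := geomOrbitSum lam⁻¹ (α : AddCircle (1 : ℝ)) F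
  have hKc : Continuous K := continuous_geomOrbitSum hc _ hFc fun x => hC x trivial
  have hintegrable {f : AddCircle (1 : ℝ) → ℝ} (hf : Continuous f) : Integrable f :=
    hf.integrable_of_hasCompactSupport (.of_compactSpace f)
  have hκ (x : AddCircle (1 : ℝ)) :
      (∑' k : ℕ, lam ^ (-(k : ℤ)) * g (x - k • (α : AddCircle (1 : ℝ)))
          * ψ (x - k • (α : AddCircle (1 : ℝ))) / 𝔭 (x - k • (α : AddCircle (1 : ℝ)))) / g x
        = K x * (lam⁻¹ * η (x + α) - η x) := by
    rw [div_eq_mul_one_div, ← hη]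
    congr 1
    refine tsum_congr fun k => ?_
    rw [zpow_neg, zpow_natCast, ← inv_pow, mul_assoc, mul_div_assoc]
  simp_rw [hκ]
  rw [integral_mul_twisted_coboundary_eq_neg volume _ _
      (geomOrbitSum_eq_add_mul hc _ fun x => hC x trivial)
      (hintegrable (hKc.mul (hηcont.comp (continuous_add_const _))))
      (hintegrable (hFc.mul hηcont)), neg_eq_zero, ← hψ]
  exact integral_congr_ae (.of_forall fun x => by dsimp only [F]; ring)

/-- If `ψ` is centered with respect to the invariant density `gη/𝔭` and `η` solves
`λ⁻¹η(x+α) - η(x) = 1/g(x)`, then `∫ κ(x)/g(x) dx = 0` where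
`κ(x) = Σ_{k≥0} λ^{-k} g(x-kα)ψ(x-kα)/𝔭(x-kα)`. -/
theorem kappa_integral_zero (α : ℝ) (lam : ℝ) (hlam : 1 < lam)
    (g 𝔭 ψ η : AddCircle (1 : ℝ) → ℝ)
    (hgcont : Continuous g) (h𝔭cont : Continuous 𝔭) (hψcont : Continuous ψ)
    (hηcont : Continuous η)
    (hgpos : ∀ x, 0 < g x) (h𝔭 : ∀ x, 0 < 𝔭 x ∧ 𝔭 x < 1)
    (hψ : ∫ x : AddCircle (1 : ℝ), (g x * η x / 𝔭 x) * ψ x = 0)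
    (hη : ∀ x, lam⁻¹ * η (x + α) - η x = 1 / g x) :
    ∫ x : AddCircle (1 : ℝ),
        (∑' k : ℕ, lam ^ (-(k : ℤ)) * g (x - k • (α : AddCircle (1 : ℝ)))
            * ψ (x - k • (α : AddCircle (1 : ℝ)))
            / 𝔭 (x - k • (α : AddCircle (1 : ℝ)))) / g x = 0 :=
  kappa_integral_zero_general α lam hlam g 𝔭 ψ η hgcont h𝔭cont hψcont hηcont h𝔭 hψ hη
end

section
/- Let α ∈ ℝ, p, q positive integers, γ ≥ 2, and suppose |qα − p| < 1/(16 q^γ). Let x ∈ 𝕋 be at distance less than 1/(16q) from the set {0, 1/q, …, (q−1)/q}, and let n ∈ ℤ with |n| ≤ q^{γ−1}. Then cos(2π q (x + nα)) > √2/2. -/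
open Real

/-! Write `q(x + nα) = (qx − j) + n(qα − p) + (j + np)`. The integer part is invisible to
`cos(2π ·)`, while `|qx − j| < 1/16` and `|n(qα − p)| ≤ q^{γ−1}/(16 q^γ) ≤ 1/16`, so the
angle is within `2π/8 = π/4` of a multiple of `2π`. -/

lemma sqrt_two_div_two_lt_cos_of_abs_lt {θ : ℝ} (hθ : |θ| < π / 4) : √2 / 2 < cos θ := by
  rw [← cos_abs, ← cos_pi_div_four]
  exact cos_lt_cos_of_nonneg_of_le_pi (abs_nonneg θ) (by linarith [pi_pos]) hθ

lemma sqrt_two_div_two_lt_cos_two_pi_mul {t : ℝ} (ht : |t| < 1 / 8) :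
    √2 / 2 < cos (2 * π * t) := by
  apply sqrt_two_div_two_lt_cos_of_abs_lt
  rw [abs_mul, abs_of_pos two_pi_pos]
  nlinarith [pi_pos]

lemma abs_mul_sub_lt_of_abs_sub_div_lt {q x y ε : ℝ} (hq : 0 < q) (h : |x - y / q| < ε / q) :
    |q * x - y| < ε := by
  have hscale : q * x - y = q * (x - y / q) := by field_simp
  rw [hscale, abs_mul, abs_of_pos hq]
  calc q * |x - y / q| < q * (ε / q) := mul_lt_mul_of_pos_left h hq
    _ = ε := by field_simp

lemma abs_mul_lt_of_abs_le_rpow_sub_one {q γ n δ c : ℝ} (hq : 0 < q)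
    (hn : |n| ≤ q ^ (γ - 1)) (hδ : |δ| < c / q ^ γ) : |n * δ| < c / q := by
  rw [abs_mul]
  calc |n| * |δ| ≤ q ^ (γ - 1) * |δ| := mul_le_mul_of_nonneg_right hn (abs_nonneg δ)
    _ < q ^ (γ - 1) * (c / q ^ γ) := mul_lt_mul_of_pos_left hδ (rpow_pos_of_pos hq _)
    _ = c / q := by
      rw [rpow_sub hq, rpow_one]
      field_simp [(rpow_pos_of_pos hq γ).ne']

theorem cos_large_near_resonance_general (α : ℝ) (p : ℤ) (q : ℕ) (hq : 1 ≤ q)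
    (γ : ℝ)
    (happrox : |(q : ℝ) * α - (p : ℝ)| < 1 / (16 * (q : ℝ) ^ γ))
    (x : ℝ) (hx : ∃ j : ℤ, |x - (j : ℝ) / (q : ℝ)| < 1 / (16 * (q : ℝ)))
    (n : ℤ) (hn : |(n : ℝ)| ≤ (q : ℝ) ^ (γ - 1)) :
    Real.cos (2 * Real.pi * (q : ℝ) * (x + (n : ℝ) * α)) > Real.sqrt 2 / 2 := by
  obtain ⟨j, hj⟩ := hx
  have hq1 : (1 : ℝ) ≤ q := by exact_mod_cast hq
  have hq0 : (0 : ℝ) < q := by linarith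
  have hshift : |(q : ℝ) * x - j| < 1 / 16 :=
    abs_mul_sub_lt_of_abs_sub_div_lt hq0 (by rwa [div_div])
  have hdrift : |(n : ℝ) * (q * α - p)| < 1 / 16 := by
    have h := abs_mul_lt_of_abs_le_rpow_sub_one hq0 hn (by rwa [← div_div] at happrox)
    calc _ < 1 / 16 / (q : ℝ) := h
      _ ≤ 1 / 16 := div_le_self (by norm_num) hq1
  have hangle : 2 * π * q * (x + n * α)
      = 2 * π * ((q * x - j) + n * (q * α - p)) + (j + n * p : ℤ) * (2 * π) := by
    push_cast
    ring
  rw [hangle, cos_add_int_mul_two_pi]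
  apply sqrt_two_div_two_lt_cos_two_pi_mul
  calc _ ≤ |(q : ℝ) * x - j| + |(n : ℝ) * (q * α - p)| := abs_add_le _ _
    _ < 1 / 8 := by linarith

/-- If `|qα - p| < 1/(16 q^γ)`, `x` is within `1/(16q)` of a multiple of `1/q`, and
`|n| ≤ q^{γ-1}`, then `cos(2πq(x + nα)) > √2/2`. -/
theorem cos_large_near_resonance (α : ℝ) (p : ℤ) (q : ℕ) (hq : 1 ≤ q)
    (γ : ℝ) (hγ : 2 ≤ γ)
    (happrox : |(q : ℝ) * α - (p : ℝ)| < 1 / (16 * (q : ℝ) ^ γ))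
    (x : ℝ) (hx : ∃ j : ℤ, |x - (j : ℝ) / (q : ℝ)| < 1 / (16 * (q : ℝ)))
    (n : ℤ) (hn : |(n : ℝ)| ≤ (q : ℝ) ^ (γ - 1)) :
    Real.cos (2 * Real.pi * (q : ℝ) * (x + (n : ℝ) * α)) > Real.sqrt 2 / 2 :=
  cos_large_near_resonance_general α p q hq γ happrox x hx n hn
end

section
/- Let α be irrational, 𝔭 : 𝕋 → (0,1) continuous, and let (X_n) be the Markov chain on 𝕋 with transition operator Tφ(x) = 𝔭(x)φ(x+α) + (1−𝔭(x))φ(x−α). Suppose p, q ∈ ℤ, q ≥ 1, γ ≥ 2 satisfy |qα − p| < 1/(16 q^γ), and set q̃ = ⌊q^{γ−1}⌋. Then for every starting point x within distance 1/(16q) of the set {0, 1/q, …, (q−1)/q}, one has E_x[cos(2π q X_{q̃})] > √2/2. -/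
open Real Function

private lemma iter_lower_bound (α : ℝ) (𝔭 : ℝ → ℝ) (h𝔭 : ∀ x, 0 < 𝔭 x ∧ 𝔭 x < 1)
    (T : (ℝ → ℝ) → (ℝ → ℝ))
    (hT : ∀ f x, T f x = 𝔭 x * f (x + α) + (1 - 𝔭 x) * f (x - α))
    (c : ℝ) : ∀ (n : ℕ) (f : ℝ → ℝ) (x : ℝ),
      (∀ k : ℤ, |k| ≤ (n : ℤ) → c < f (x + (k : ℝ) * α)) → c < T^[n] f x := by
  intro n
  induction n with
  | zero =>
    intro f x h
    have := h 0 (by simp)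
    simpa using this
  | succ n ih =>
    intro f x h
    rw [Function.iterate_succ_apply]
    apply ih
    intro k hk
    rw [hT]
    have hp := h𝔭 (x + (k : ℝ) * α)
    have h1 : c < f (x + (k : ℝ) * α + α) := by
      have := h (k + 1) (by
        have := abs_add_le k 1
        simp at this ⊢; omega)
      have e : x + ((k : ℝ) + 1) * α = x + (k : ℝ) * α + α := by ring
      push_cast at this
      rwa [e] at this
    have h2 : c < f (x + (k : ℝ) * α - α) := by
      have := h (k - 1) (by
        have := abs_sub k 1
        simp at this ⊢; omega)
      have e : x + ((k : ℝ) - 1) * α = x + (k : ℝ) * α - α := by ring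
      push_cast at this
      rwa [e] at this
    nlinarith [hp.1, hp.2, h1, h2]

/-- For the quasi-periodic random walk with operator
`Tφ(x) = 𝔭(x)φ(x+α) + (1-𝔭(x))φ(x-α)` (so that `E_x[f(X_n)] = Tⁿf(x)`): if
`|qα - p| < 1/(16 q^γ)` and `x` is within `1/(16q)` of a multiple of `1/q`, then after
`q̃ = ⌊q^{γ-1}⌋` steps, `E_x[cos(2πq X_q̃)] > √2/2`. -/
theorem expectation_cos_after_qtilde_steps (α : ℝ) (hα : Irrational α)
    (𝔭 : ℝ → ℝ) (h𝔭cont : Continuous 𝔭) (h𝔭per : Function.Periodic 𝔭 1)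
    (h𝔭 : ∀ x, 0 < 𝔭 x ∧ 𝔭 x < 1)
    (T : (ℝ → ℝ) → (ℝ → ℝ))
    (hT : ∀ f x, T f x = 𝔭 x * f (x + α) + (1 - 𝔭 x) * f (x - α))
    (p : ℤ) (q : ℕ) (hq : 1 ≤ q) (γ : ℝ) (hγ : 2 ≤ γ)
    (happrox : |(q : ℝ) * α - (p : ℝ)| < 1 / (16 * (q : ℝ) ^ γ))
    (x : ℝ) (hx : ∃ j : ℤ, |x - (j : ℝ) / (q : ℝ)| < 1 / (16 * (q : ℝ))) :
    (T^[⌊(q : ℝ) ^ (γ - 1)⌋₊] (fun y => Real.cos (2 * Real.pi * (q : ℝ) * y))) x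
      > Real.sqrt 2 / 2 := by
  obtain ⟨j, hj⟩ := hx
  have hq0 : (0 : ℝ) < (q : ℝ) := by exact_mod_cast hq
  have hqγ : (0 : ℝ) < (q : ℝ) ^ γ := Real.rpow_pos_of_pos hq0 γ
  set n := ⌊(q : ℝ) ^ (γ - 1)⌋₊ with hn
  apply iter_lower_bound α 𝔭 h𝔭 T hT
  intro k hk
  -- phase decomposition
  set ε : ℝ := (q : ℝ) * x - j with hε
  set δ : ℝ := (q : ℝ) * α - p with hδ
  have hεbound : |ε| < 1 / 16 := by
    have : ε = (q : ℝ) * (x - (j : ℝ) / (q : ℝ)) := by field_simp [hε]; ring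
    rw [this, abs_mul, abs_of_pos hq0]
    calc (q : ℝ) * |x - (j : ℝ) / (q : ℝ)| < (q : ℝ) * (1 / (16 * (q : ℝ))) := by
          exact mul_lt_mul_of_pos_left hj hq0
      _ = 1 / 16 := by field_simp
  have hkreal : |(k : ℝ)| ≤ (q : ℝ) ^ (γ - 1) := by
    have h1 : |(k : ℝ)| ≤ (n : ℝ) := by exact_mod_cast hk
    exact h1.trans (Nat.floor_le (Real.rpow_nonneg hq0.le _))
  have hkδ : |(k : ℝ) * δ| ≤ 1 / 16 := by
    rw [abs_mul]
    have h2 : |δ| ≤ 1 / (16 * (q : ℝ) ^ γ) := happrox.le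
    calc |(k : ℝ)| * |δ| ≤ (q : ℝ) ^ (γ - 1) * (1 / (16 * (q : ℝ) ^ γ)) :=
          mul_le_mul hkreal h2 (abs_nonneg _) (Real.rpow_nonneg hq0.le _)
      _ = 1 / (16 * (q : ℝ)) := by
          rw [Real.rpow_sub hq0, Real.rpow_one]
          field_simp
      _ ≤ 1 / 16 := by
          apply div_le_div_of_nonneg_left (by norm_num) (by norm_num)
          have hq1 : (1:ℝ) ≤ (q:ℝ) := by exact_mod_cast hq
          nlinarith
  have htot : |ε + (k : ℝ) * δ| < 1 / 8 := by
    calc |ε + (k : ℝ) * δ| ≤ |ε| + |(k : ℝ) * δ| := abs_add_le _ _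
      _ < 1 / 16 + 1 / 16 := by linarith
      _ = 1 / 8 := by norm_num
  -- rewrite the cosine
  have hphase : 2 * Real.pi * (q : ℝ) * (x + (k : ℝ) * α)
      = 2 * Real.pi * (ε + (k : ℝ) * δ) + ((j + k * p : ℤ) : ℝ) * (2 * Real.pi) := by
    push_cast
    simp only [hε, hδ]
    ring
  show Real.sqrt 2 / 2 < Real.cos (2 * Real.pi * (q : ℝ) * (x + (k : ℝ) * α))
  rw [hphase, Real.cos_add_int_mul_two_pi]
  set t := ε + (k : ℝ) * δ
  have hπ := Real.pi_pos
  have : Real.cos (Real.pi / 4) < Real.cos |2 * Real.pi * t| := by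
    apply Real.cos_lt_cos_of_nonneg_of_le_pi (abs_nonneg _) (by linarith)
    have : |2 * Real.pi * t| = 2 * Real.pi * |t| := by
      rw [abs_mul, abs_of_pos (by linarith : (0:ℝ) < 2 * Real.pi)]
    rw [this]
    nlinarith
  rw [Real.cos_abs, Real.cos_pi_div_four] at this
  exact this
end

section
/- Consider the random walk on 𝕋 with transition operator Tψ(x) = 𝔭(x)ψ(x+α) + 𝔮(x)ψ(x−α), with α irrational, 𝔭 continuous, 0 < 𝔭 < 1, 𝔮 = 1 − 𝔭. Suppose g : 𝕋 → (0,∞) is continuous and satisfies 𝔭(x)/𝔮(x) = g(x+α)/g(x) for all x. Then the measure with density proportional to g(x)/𝔮(x) with respect to Lebesgue measure on 𝕋 is stationary for T, i.e. ∫_𝕋 Tψ(x) · g(x)/𝔮(x) dx = ∫_𝕋 ψ(x) · g(x)/𝔮(x) dx for every continuous ψ. -/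
open MeasureTheory

/-- If `g > 0` solves `𝔭/𝔮 = g(·+α)/g`, then the density `g/𝔮` (with respect to
Lebesgue measure on the circle) is stationary for the quasi-periodic random walk
operator `Tψ(x) = 𝔭(x)ψ(x+α) + 𝔮(x)ψ(x-α)`. -/
theorem stationary_density_symmetric (α : ℝ) (hα : Irrational α)
    (𝔭 : AddCircle (1 : ℝ) → ℝ) (h𝔭cont : Continuous 𝔭)
    (h𝔭 : ∀ x, 0 < 𝔭 x ∧ 𝔭 x < 1)
    (g : AddCircle (1 : ℝ) → ℝ) (hgcont : Continuous g) (hgpos : ∀ x, 0 < g x)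
    (hg : ∀ x, 𝔭 x / (1 - 𝔭 x) = g (x + α) / g x)
    (ψ : AddCircle (1 : ℝ) → ℝ) (hψcont : Continuous ψ) :
    ∫ x : AddCircle (1 : ℝ),
        (𝔭 x * ψ (x + α) + (1 - 𝔭 x) * ψ (x - α)) * (g x / (1 - 𝔭 x))
      = ∫ x : AddCircle (1 : ℝ), ψ x * (g x / (1 - 𝔭 x)) := by
  have hne : ∀ x, (1 - 𝔭 x) ≠ 0 := fun x => by have := (h𝔭 x).2; intro h; linarith
  have hkey : ∀ x, 𝔭 x * g x = g (x + α) * (1 - 𝔭 x) := by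
    intro x
    have h := hg x
    rw [div_eq_div_iff (hne x) (hgpos x).ne'] at h
    exact h
  have hL : ∀ x : AddCircle (1 : ℝ),
      (𝔭 x * ψ (x + α) + (1 - 𝔭 x) * ψ (x - α)) * (g x / (1 - 𝔭 x))
        = ψ (x + α) * g (x + α) + ψ (x - α) * g x := by
    intro x
    have h1 : 𝔭 x * g x / (1 - 𝔭 x) = g (x + α) := by
      rw [hkey x, mul_div_assoc, div_self (hne x), mul_one]
    calc (𝔭 x * ψ (x + α) + (1 - 𝔭 x) * ψ (x - α)) * (g x / (1 - 𝔭 x))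
        = ψ (x + α) * (𝔭 x * g x / (1 - 𝔭 x))
          + ψ (x - α) * ((1 - 𝔭 x) * g x / (1 - 𝔭 x)) := by ring
      _ = ψ (x + α) * g (x + α) + ψ (x - α) * g x := by
          rw [h1, mul_comm (1 - 𝔭 x) (g x), mul_div_assoc,
            div_self (hne x), mul_one]
  have hR : ∀ x : AddCircle (1 : ℝ),
      ψ x * (g x / (1 - 𝔭 x)) = ψ x * g x + ψ x * g (x + α) := by
    intro x
    have : g x / (1 - 𝔭 x) = g x + g (x + α) := by
      rw [div_eq_iff (hne x)]
      linear_combination hkey x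
    rw [this]; ring
  simp only [hL, hR]
  have hcont1 : Continuous fun x : AddCircle (1 : ℝ) => ψ (x + α) * g (x + α) :=
    ((hψcont.comp (continuous_id.add continuous_const)).mul
      (hgcont.comp (continuous_id.add continuous_const)))
  have hcont2 : Continuous fun x : AddCircle (1 : ℝ) => ψ (x - α) * g x :=
    ((hψcont.comp (continuous_id.sub continuous_const)).mul hgcont)
  have hcont3 : Continuous fun x : AddCircle (1 : ℝ) => ψ x * g x := hψcont.mul hgcont
  have hcont4 : Continuous fun x : AddCircle (1 : ℝ) => ψ x * g (x + α) :=
    hψcont.mul (hgcont.comp (continuous_id.add continuous_const))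
  rw [integral_add (hcont1.integrable_of_hasCompactSupport (HasCompactSupport.of_compactSpace _)) (hcont2.integrable_of_hasCompactSupport (HasCompactSupport.of_compactSpace _)),
      integral_add (hcont3.integrable_of_hasCompactSupport (HasCompactSupport.of_compactSpace _)) (hcont4.integrable_of_hasCompactSupport (HasCompactSupport.of_compactSpace _))]
  have e1 : ∫ x : AddCircle (1 : ℝ), ψ (x + α) * g (x + α)
      = ∫ x : AddCircle (1 : ℝ), ψ x * g x :=
    integral_add_right_eq_self (μ := volume) (fun x => ψ x * g x) α
  have e2 : ∫ x : AddCircle (1 : ℝ), ψ x * g (x + α)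
      = ∫ x : AddCircle (1 : ℝ), ψ (x - α) * g x := by
    have := integral_add_right_eq_self (μ := volume) (fun x : AddCircle (1 : ℝ) => ψ (x - α) * g x) α
    simp only [add_sub_cancel_right] at this
    exact this
  rw [e1, e2]
end
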